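/- arXiv:2212.14738 — 2 statements merged into one kernel-verified Lean document; each statement's English description precedes it below -/
import Mathlib

section
/- Fix a real number x > 0 and let α₁, α₂ ∈ (0, π/2) with α₁ ≠ α₂. Then arcsin( cos((α₁ + α₂)/2) / cosh x ) > ( arcsin( cos α₁ / cosh x ) + arcsin( cos α₂ / cosh x ) ) / 2. -/
/-!
For `c > 1` the function `f α = arcsin (cos α / c)` is strictly concave on `[0, π/2]`: since
`c² - cos² α = (c² - 1) + sin² α`, its derivative is `-g (sin α)` with `g s = s / √(c² - 1 + s²)`,
and `g` is strictly increasing on `s ≥ 0`, as is `sin` on `[0, π/2]`. The inequality is the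
midpoint case of strict concavity, with `c = cosh x > 1`.
-/

open Real Set

theorem strictMonoOn_div_sqrt_add_sq {k : ℝ} (hk : 0 < k) :
    StrictMonoOn (fun s : ℝ => s / √(k + s ^ 2)) (Ici 0) := by
  intro s (hs : 0 ≤ s) t (ht : 0 ≤ t) hst
  have hks : 0 < k + s ^ 2 := by positivity
  have hkt : 0 < k + t ^ 2 := by positivity
  dsimp only
  rw [div_lt_div_iff₀ (sqrt_pos.2 hks) (sqrt_pos.2 hkt)]
  apply lt_of_pow_lt_pow_left₀ 2 (mul_nonneg ht (sqrt_nonneg _))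
  rw [mul_pow, mul_pow, sq_sqrt hks.le, sq_sqrt hkt.le]
  nlinarith [mul_pos hk (mul_pos (sub_pos.2 hst) (add_pos_of_nonneg_of_pos hs (hs.trans_lt hst)))]

theorem hasDerivAt_arcsin_cos_div {c : ℝ} (hc : 1 < c) (α : ℝ) :
    HasDerivAt (fun α => arcsin (cos α / c)) (-(sin α / √(c ^ 2 - 1 + sin α ^ 2))) α := by
  have hc0 : 0 < c := one_pos.trans hc
  have hlt : |cos α / c| < 1 := by
    rw [abs_div, abs_of_pos hc0, div_lt_one hc0]
    exact (abs_cos_le_one α).trans_lt hc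
  have hchain := (hasDerivAt_arcsin (abs_lt.1 hlt).1.ne' (abs_lt.1 hlt).2.ne).comp α
    ((hasDerivAt_cos α).div_const c)
  refine hchain.congr_deriv ?_
  have hsqrt : √(c ^ 2 - 1 + sin α ^ 2) = c * √(1 - (cos α / c) ^ 2) := by
    rw [← sqrt_sq hc0.le, ← sqrt_mul (sq_nonneg c), sqrt_sq hc0.le]
    congr 1
    field_simp
    linear_combination sin_sq_add_cos_sq α
  rw [hsqrt]
  field_simp

theorem strictConcaveOn_arcsin_cos_div {c : ℝ} (hc : 1 < c) :
    StrictConcaveOn ℝ (Icc 0 (π / 2)) (fun α => arcsin (cos α / c)) := by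
  apply StrictAntiOn.strictConcaveOn_of_deriv (convex_Icc _ _) (by fun_prop)
  rw [interior_Icc, funext fun α => (hasDerivAt_arcsin_cos_div hc α).deriv]
  have hsin : StrictMonoOn sin (Ioo 0 (π / 2)) :=
    strictMonoOn_sin.mono fun α hα => ⟨by linarith [pi_pos, hα.1], hα.2.le⟩
  have hmaps : MapsTo sin (Ioo 0 (π / 2)) (Ici 0) := fun α hα =>
    (sin_pos_of_pos_of_lt_pi hα.1 (by linarith [pi_pos, hα.2])).le
  intro a ha b hb hab
  exact neg_lt_neg <|
    (strictMonoOn_div_sqrt_add_sq (by nlinarith : 0 < c ^ 2 - 1)).comp hsin hmaps ha hb hab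

theorem stmt_4 (x : ℝ) (hx : 0 < x) (α₁ α₂ : ℝ)
    (h₁ : α₁ ∈ Set.Ioo 0 (π / 2)) (h₂ : α₂ ∈ Set.Ioo 0 (π / 2))
    (hne : α₁ ≠ α₂) :
    (Real.arcsin (Real.cos α₁ / Real.cosh x) +
        Real.arcsin (Real.cos α₂ / Real.cosh x)) / 2 <
      Real.arcsin (Real.cos ((α₁ + α₂) / 2) / Real.cosh x) := by
  have hmid := (strictConcaveOn_arcsin_cos_div (one_lt_cosh.2 hx.ne')).2
    (Ioo_subset_Icc_self h₁) (Ioo_subset_Icc_self h₂) hne one_half_pos one_half_pos (add_halves 1)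
  simp only [smul_eq_mul] at hmid
  calc _ = 1 / 2 * arcsin (cos α₁ / cosh x) + 1 / 2 * arcsin (cos α₂ / cosh x) := by ring
    _ < arcsin (cos (1 / 2 * α₁ + 1 / 2 * α₂) / cosh x) := hmid
    _ = _ := by ring_nf
end

section
/- Fix an integer l ≥ 4 and nonnegative integers A₁, …, A_{l−1}, B₃, …, B_l with w := ∑_{j=3}^{l} B_j satisfying ∑_{i=1}^{l−1} A_i = l and ∑_{i=1}^{l−1} i·A_i + ∑_{j=3}^{l} j·B_j = 2(l + w − 1). Define h(β) = ∑_{i=1}^{l−1} i·A_i·2·arcsin( 2·cos(π/(3i))·sin(β/2) ) + ∑_{j=3}^{l} j·B_j·2·arcsin( 2·cos(π/j)·sin(β/2) ) − 2π and K_l = 2·arcsin( 1 / (2·cos(π/(3(l−1)))) ). If β ∈ (0, K_l] satisfies h(β) = 0, then β ≥ 2π/(4l − 6); equivalently, the inscribed circle radius x determined by cosh x = 1/(2·sin(β/2)) satisfies cosh x ≤ 1 / (2·sin(π/(4l − 6))). Equality is attained exactly for the maximal solution A₁ = l, B₃ = l − 2 (all other A_i, B_j zero). -/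
/-!
Write `t = β / 2` and `k m = 3 - 6 / m`. A vertex of order `m = 3` contributes a central angle of
exactly `β`. For `4 ≤ m ≤ 3l - 3` and `β ≤ 2π / (4l - 6)` the contribution is strictly smaller than
`2 k m t`, because `2 cos (π / m) t ≤ k m t - (k m t)³ / 6 < sin (k m t)` on that range. The two
Diophantine relations make these bounds, weighted by the counts `A i` and `B j`, add up to exactly
`(4l - 6) β`. Hence the central angles sum to less than `2π` when `β < 2π / (4l - 6)`, and at
`β = 2π / (4l - 6)` every vertex must have order `3`, which is the maximal solution.
-/

open Real Finset

lemma arcsin_mul_sin_lt {c k t : ℝ} (hc : 0 ≤ c) (ht : 0 ≤ t) (hkt : 0 < k * t)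
    (hkt' : k * t ≤ π / 2) (h : c * t ≤ k * t - (k * t) ^ 3 / 6) :
    arcsin (c * sin t) < k * t := by
  rw [arcsin_lt_iff_lt_sin' ⟨by linarith [pi_pos], hkt'⟩]
  calc c * sin t ≤ c * t := mul_le_mul_of_nonneg_left (sin_le ht) hc
    _ ≤ k * t - (k * t) ^ 3 / 6 := h
    _ < sin (k * t) := sin_gt_sub_cube hkt

lemma cube_mul_sq_div_six_le {x t : ℝ} (hx : 9 ≤ x) (ht : 0 ≤ t) (hxt : (4 * x - 6) * t ≤ 3 * π) :
    (3 - 6 / x) ^ 3 * t ^ 2 / 6 ≤ 1 - 6 / x := by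
  have hpoly : 81 * π ^ 2 * (x - 2) ^ 3 ≤ 2 * x ^ 2 * (x - 6) * (4 * x - 6) ^ 2 := by
    have hπ : π ^ 2 < 10 := by nlinarith [pi_lt_d2, pi_pos]
    have h3 : 0 ≤ (x - 2) ^ 3 := pow_nonneg (by linarith) 3
    have hy := sub_nonneg.2 hx
    nlinarith [mul_le_mul_of_nonneg_right hπ.le h3, pow_nonneg hy 3, pow_nonneg hy 4, pow_nonneg hy 5]
  have ht2 : ((4 * x - 6) * t) ^ 2 ≤ (3 * π) ^ 2 :=
    pow_le_pow_left₀ (mul_nonneg (by linarith) ht) hxt 2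
  have h27 : 27 * (x - 2) ^ 3 * t ^ 2 ≤ 6 * x ^ 2 * (x - 6) := by
    have := mul_le_mul_of_nonneg_left ht2 (pow_nonneg (by linarith : 0 ≤ x - 2) 3)
    refine le_of_mul_le_mul_right ?_ (by nlinarith : 0 < (4 * x - 6) ^ 2)
    nlinarith
  have hx0 : x ≠ 0 := by positivity
  calc (3 - 6 / x) ^ 3 * t ^ 2 / 6 = 27 * (x - 2) ^ 3 * t ^ 2 / (6 * x ^ 3) := by
        field_simp; ring
    _ ≤ 6 * x ^ 2 * (x - 6) / (6 * x ^ 3) := by gcongr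
    _ = 1 - 6 / x := by field_simp

lemma two_cos_pi_div_add_le_of_le_eight (m : ℕ) (hm : 4 ≤ m) (hm8 : m ≤ 8) {t : ℝ} (ht : 0 ≤ t)
    (h10 : 10 * t ≤ π) :
    2 * cos (π / m) + (3 - 6 / m) ^ 3 * t ^ 2 / 6 ≤ 3 - 6 / m := by
  have hm4 : (4 : ℝ) ≤ m := by exact_mod_cast hm
  have hx : |π / m| ≤ 1 := by
    rw [abs_of_pos (by positivity), div_le_one (by positivity)]
    linarith [pi_lt_four]
  have hcos := (abs_le.1 (cos_bound hx)).2
  rw [abs_of_pos (by positivity)] at hcos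
  have hk : 0 ≤ 3 - 6 / (m : ℝ) := by
    have : 6 / (m : ℝ) ≤ 6 / 4 := by gcongr
    linarith
  have ht2 : (3 - 6 / (m : ℝ)) ^ 3 * t ^ 2 ≤ (3 - 6 / (m : ℝ)) ^ 3 * (π ^ 2 / 100) := by
    gcongr
    nlinarith
  have hπ2 : 9.85 < π ^ 2 := by nlinarith [pi_gt_d2]
  have hπ2' : π ^ 2 < 9.93 := by nlinarith [pi_lt_d2, pi_pos]
  have hπ4 : π ^ 4 < 98.7 := by nlinarith
  suffices 2 * (1 - (π / m) ^ 2 / 2 + (π / m) ^ 4 * (5 / 96)) + (3 - 6 / m) ^ 3 * (π ^ 2 / 100) / 6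
      ≤ 3 - 6 / m by linarith
  interval_cases m <;> norm_num <;> linarith

-- For `m ≤ 8` the bound `cos ≤ 1` is too weak and the fourth-order Taylor bound is needed.
lemma two_cos_pi_div_add_le (m : ℕ) (hm : 4 ≤ m) {t : ℝ} (ht : 0 ≤ t) (h10 : 10 * t ≤ π)
    (hmt : (4 * m - 6) * t ≤ 3 * π) :
    2 * cos (π / m) + (3 - 6 / m) ^ 3 * t ^ 2 / 6 ≤ 3 - 6 / m := by
  rcases le_or_gt m 8 with hm8 | hm9
  · exact two_cos_pi_div_add_le_of_le_eight m hm hm8 ht h10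
  · have hx : (9 : ℝ) ≤ m := by exact_mod_cast hm9
    linarith [cos_le_one (π / m), cube_mul_sq_div_six_le hx ht hmt]

lemma arcsin_two_cos_pi_div_mul_sin_lt (m : ℕ) (hm : 4 ≤ m) {t : ℝ} (ht : 0 < t)
    (h10 : 10 * t ≤ π) (hmt : (4 * m - 6) * t ≤ 3 * π) :
    arcsin (2 * cos (π / m) * sin t) < (3 - 6 / m) * t := by
  have hm4 : (4 : ℝ) ≤ m := by exact_mod_cast hm
  have hk : 0 < 3 - 6 / (m : ℝ) ∧ 3 - 6 / (m : ℝ) ≤ 3 := by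
    have : 6 / (m : ℝ) ≤ 6 / 4 := by gcongr
    constructor <;> [linarith; linarith [(by positivity : 0 ≤ 6 / (m : ℝ))]]
  have hcos : 0 ≤ cos (π / m) :=
    cos_nonneg_of_mem_Icc ⟨by linarith [(by positivity : 0 ≤ π / m)], by
      rw [div_le_div_iff₀ (by positivity) two_pos]; nlinarith [pi_pos]⟩
  refine arcsin_mul_sin_lt (by positivity) ht.le (mul_pos hk.1 ht) (by nlinarith) ?_
  have := mul_le_mul_of_nonneg_left (two_cos_pi_div_add_le m hm ht.le h10 hmt) ht.le
  linarith

noncomputable def centralAngle (m β : ℝ) : ℝ := 2 * arcsin (2 * cos (π / m) * sin (β / 2))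

noncomputable def centralAngleSum (l : ℕ) (A B : ℕ → ℕ) (β : ℝ) : ℝ :=
  ∑ i ∈ Icc 1 (l - 1), (i : ℝ) * A i * centralAngle (3 * i) β +
    ∑ j ∈ Icc 3 l, (j : ℝ) * B j * centralAngle j β

lemma centralAngle_three {β : ℝ} (hβ₀ : 0 ≤ β) (hβπ : β ≤ π) : centralAngle 3 β = β := by
  rw [centralAngle, cos_pi_div_three, show (2 : ℝ) * (1 / 2) = 1 by norm_num, one_mul,
    arcsin_sin (by linarith) (by linarith)]
  ring

section

variable {l : ℕ} {β : ℝ}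

lemma le_pi_of_mul_le (hl : 4 ≤ l) (hβ₀ : 0 < β) (hβ : (4 * l - 6) * β ≤ 2 * π) : β ≤ π := by
  have hl4 : (4 : ℝ) ≤ l := by exact_mod_cast hl
  nlinarith

lemma mul_centralAngle_lt (hl : 4 ≤ l) (hβ₀ : 0 < β) (hβ : (4 * l - 6) * β ≤ 2 * π)
    {m : ℕ} (hm : 4 ≤ m) (hml : (m : ℝ) ≤ 3 * l - 3) :
    m * centralAngle m β < (3 * m - 6) * β := by
  have hl4 : (4 : ℝ) ≤ l := by exact_mod_cast hl
  have h := arcsin_two_cos_pi_div_mul_sin_lt m hm (half_pos hβ₀) (by nlinarith) (by nlinarith)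
  have hm0 : (0 : ℝ) < m := by positivity
  calc (m : ℝ) * centralAngle m β < m * (2 * ((3 - 6 / m) * (β / 2))) := by
        unfold centralAngle; gcongr
    _ = (3 * m - 6) * β := by field_simp

lemma rotation_term_lt (hl : 4 ≤ l) (hβ₀ : 0 < β) (hβ : (4 * l - 6) * β ≤ 2 * π)
    {i : ℕ} (hi : i ∈ Icc 2 (l - 1)) {a : ℕ} (ha : a ≠ 0) :
    (i : ℝ) * a * centralAngle (3 * i) β < (3 * i - 2) * a * β := by
  obtain ⟨hi2, hil⟩ := mem_Icc.1 hi
  have h := mul_centralAngle_lt hl hβ₀ hβ (m := 3 * i) (by omega) (by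
    have : ((i + 1 : ℕ) : ℝ) ≤ l := by exact_mod_cast (by omega : i + 1 ≤ l)
    push_cast at this ⊢; linarith)
  push_cast at h
  have ha0 : (0 : ℝ) < a := by positivity
  calc (i : ℝ) * a * centralAngle (3 * i) β = a / 3 * (3 * i * centralAngle (3 * i) β) := by ring
    _ < a / 3 * ((3 * (3 * i) - 6) * β) := by gcongr
    _ = (3 * i - 2) * a * β := by ring

lemma rotation_term_le (hl : 4 ≤ l) (hβ₀ : 0 < β) (hβ : (4 * l - 6) * β ≤ 2 * π)
    {i : ℕ} (hi : i ∈ Icc 1 (l - 1)) (a : ℕ) :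
    (i : ℝ) * a * centralAngle (3 * i) β ≤ (3 * i - 2) * a * β := by
  obtain ⟨hi1, hil⟩ := mem_Icc.1 hi
  obtain rfl | hi2 : i = 1 ∨ 2 ≤ i := by omega
  · norm_num [centralAngle_three hβ₀.le (le_pi_of_mul_le hl hβ₀ hβ)]
  obtain rfl | ha := eq_or_ne a 0
  · simp
  · exact (rotation_term_lt hl hβ₀ hβ (mem_Icc.2 ⟨hi2, hil⟩) ha).le

lemma point_term_lt (hl : 4 ≤ l) (hβ₀ : 0 < β) (hβ : (4 * l - 6) * β ≤ 2 * π)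
    {j : ℕ} (hj : j ∈ Icc 4 l) {b : ℕ} (hb : b ≠ 0) :
    (j : ℝ) * b * centralAngle j β < (3 * j - 6) * b * β := by
  obtain ⟨hj4, hjl⟩ := mem_Icc.1 hj
  have h := mul_centralAngle_lt hl hβ₀ hβ hj4 (by
    have : (j : ℝ) ≤ l := by exact_mod_cast hjl
    have hl4 : (4 : ℝ) ≤ l := by exact_mod_cast hl
    linarith)
  have hb0 : (0 : ℝ) < b := by positivity
  calc (j : ℝ) * b * centralAngle j β = b * (j * centralAngle j β) := by ring
    _ < b * ((3 * j - 6) * β) := by gcongr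
    _ = (3 * j - 6) * b * β := by ring

lemma point_term_le (hl : 4 ≤ l) (hβ₀ : 0 < β) (hβ : (4 * l - 6) * β ≤ 2 * π)
    {j : ℕ} (hj : j ∈ Icc 3 l) (b : ℕ) :
    (j : ℝ) * b * centralAngle j β ≤ (3 * j - 6) * b * β := by
  obtain ⟨hj3, hjl⟩ := mem_Icc.1 hj
  obtain rfl | hj4 : j = 3 ∨ 4 ≤ j := by omega
  · norm_num [centralAngle_three hβ₀.le (le_pi_of_mul_le hl hβ₀ hβ)]
  obtain rfl | hb := eq_or_ne b 0
  · simp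
  · exact (point_term_lt hl hβ₀ hβ (mem_Icc.2 ⟨hj4, hjl⟩) hb).le

variable {A B : ℕ → ℕ}

lemma weighted_sum_eq (hl : 1 ≤ l) (hA : ∑ i ∈ Icc 1 (l - 1), A i = l)
    (hdeg : ∑ i ∈ Icc 1 (l - 1), i * A i + ∑ j ∈ Icc 3 l, j * B j
      = 2 * (l + (∑ j ∈ Icc 3 l, B j) - 1)) (β : ℝ) :
    ∑ i ∈ Icc 1 (l - 1), (3 * i - 2) * (A i : ℝ) * β + ∑ j ∈ Icc 3 l, (3 * j - 6) * (B j : ℝ) * β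
      = (4 * l - 6) * β := by
  have hdeg' : ∑ i ∈ Icc 1 (l - 1), i * A i + ∑ j ∈ Icc 3 l, j * B j + 2
      = 2 * l + 2 * ∑ j ∈ Icc 3 l, B j := by omega
  have hA' : ∑ i ∈ Icc 1 (l - 1), (A i : ℝ) = l := by exact_mod_cast hA
  have hdeg'' : ∑ i ∈ Icc 1 (l - 1), (i : ℝ) * A i + ∑ j ∈ Icc 3 l, (j : ℝ) * B j + 2
      = 2 * l + 2 * ∑ j ∈ Icc 3 l, (B j : ℝ) := by exact_mod_cast hdeg'
  have eA : ∑ i ∈ Icc 1 (l - 1), (3 * i - 2) * (A i : ℝ) * β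
      = (3 * ∑ i ∈ Icc 1 (l - 1), (i : ℝ) * A i - 2 * ∑ i ∈ Icc 1 (l - 1), (A i : ℝ)) * β := by
    rw [mul_sum, mul_sum, ← sum_sub_distrib, sum_mul]
    exact sum_congr rfl fun i _ => by ring
  have eB : ∑ j ∈ Icc 3 l, (3 * j - 6) * (B j : ℝ) * β
      = (3 * ∑ j ∈ Icc 3 l, (j : ℝ) * B j - 6 * ∑ j ∈ Icc 3 l, (B j : ℝ)) * β := by
    rw [mul_sum, mul_sum, ← sum_sub_distrib, sum_mul]
    exact sum_congr rfl fun j _ => by ring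
  rw [eA, eB]
  linear_combination (3 * β) * hdeg'' - (2 * β) * hA'

lemma centralAngleSum_le (hl : 4 ≤ l) (hA : ∑ i ∈ Icc 1 (l - 1), A i = l)
    (hdeg : ∑ i ∈ Icc 1 (l - 1), i * A i + ∑ j ∈ Icc 3 l, j * B j
      = 2 * (l + (∑ j ∈ Icc 3 l, B j) - 1))
    (hβ₀ : 0 < β) (hβ : (4 * l - 6) * β ≤ 2 * π) :
    centralAngleSum l A B β ≤ (4 * l - 6) * β := by
  rw [← weighted_sum_eq (by omega) hA hdeg]
  exact add_le_add (sum_le_sum fun i hi => rotation_term_le hl hβ₀ hβ hi (A i))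
    (sum_le_sum fun j hj => point_term_le hl hβ₀ hβ hj (B j))

lemma forall_eq_zero_of_centralAngleSum_eq (hl : 4 ≤ l) (hA : ∑ i ∈ Icc 1 (l - 1), A i = l)
    (hdeg : ∑ i ∈ Icc 1 (l - 1), i * A i + ∑ j ∈ Icc 3 l, j * B j
      = 2 * (l + (∑ j ∈ Icc 3 l, B j) - 1))
    (hβ₀ : 0 < β) (hβ : (4 * l - 6) * β ≤ 2 * π)
    (h : centralAngleSum l A B β = (4 * l - 6) * β) :
    (∀ i, 2 ≤ i → i ≤ l - 1 → A i = 0) ∧ (∀ j, 4 ≤ j → j ≤ l → B j = 0) := by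
  rw [← weighted_sum_eq (by omega) hA hdeg, centralAngleSum] at h
  have hR := fun i (hi : i ∈ Icc 1 (l - 1)) => rotation_term_le hl hβ₀ hβ hi (A i)
  have hP := fun j (hj : j ∈ Icc 3 l) => point_term_le hl hβ₀ hβ hj (B j)
  refine ⟨fun i hi2 hil => ?_, fun j hj4 hjl => ?_⟩ <;> by_contra hne <;> refine h.not_lt ?_
  · exact add_lt_add_of_lt_of_le (sum_lt_sum hR ⟨i, mem_Icc.2 ⟨by omega, hil⟩,
      rotation_term_lt hl hβ₀ hβ (mem_Icc.2 ⟨hi2, hil⟩) hne⟩) (sum_le_sum hP)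
  · exact add_lt_add_of_le_of_lt (sum_le_sum hR) (sum_lt_sum hP ⟨j, mem_Icc.2 ⟨by omega, hjl⟩,
      point_term_lt hl hβ₀ hβ (mem_Icc.2 ⟨hj4, hjl⟩) hne⟩)

lemma centralAngleSum_of_maximal (hl : 3 ≤ l) (hβ₀ : 0 ≤ β) (hβπ : β ≤ π)
    (hA1 : A 1 = l) (hA0 : ∀ i, 2 ≤ i → i ≤ l - 1 → A i = 0)
    (hB3 : B 3 = l - 2) (hB0 : ∀ j, 4 ≤ j → j ≤ l → B j = 0) :
    centralAngleSum l A B β = (4 * l - 6) * β := by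
  rw [centralAngleSum, sum_eq_single_of_mem 1 (mem_Icc.2 ⟨le_rfl, by omega⟩),
    sum_eq_single_of_mem 3 (mem_Icc.2 ⟨le_rfl, hl⟩)]
  · rw [hA1, hB3, Nat.cast_sub (by omega)]
    norm_num [centralAngle_three hβ₀ hβπ]
    ring
  · intro j hj hj3
    rw [hB0 j (by grind) (mem_Icc.1 hj).2]
    simp
  · intro i hi hi1
    rw [hA0 i (by grind) (mem_Icc.1 hi).2]
    simp

lemma eq_maximal_of_forall_eq_zero (hl : 3 ≤ l) (hA : ∑ i ∈ Icc 1 (l - 1), A i = l)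
    (hdeg : ∑ i ∈ Icc 1 (l - 1), i * A i + ∑ j ∈ Icc 3 l, j * B j
      = 2 * (l + (∑ j ∈ Icc 3 l, B j) - 1))
    (hA0 : ∀ i, 2 ≤ i → i ≤ l - 1 → A i = 0) (hB0 : ∀ j, 4 ≤ j → j ≤ l → B j = 0) :
    A 1 = l ∧ B 3 = l - 2 := by
  have h1 : 1 ∈ Icc 1 (l - 1) := mem_Icc.2 ⟨le_rfl, by omega⟩
  have h3 : 3 ∈ Icc 3 l := mem_Icc.2 ⟨le_rfl, hl⟩
  have hA0' : ∀ i ∈ Icc 1 (l - 1), i ≠ 1 → A i = 0 := fun i hi hi1 =>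
    hA0 i (by grind) (mem_Icc.1 hi).2
  have hB0' : ∀ j ∈ Icc 3 l, j ≠ 3 → B j = 0 := fun j hj hj3 =>
    hB0 j (by grind) (mem_Icc.1 hj).2
  rw [sum_eq_single_of_mem 1 h1 hA0'] at hA
  rw [sum_eq_single_of_mem 1 h1 (fun i hi hi1 => by simp [hA0' i hi hi1]),
    sum_eq_single_of_mem 3 h3 (fun j hj hj3 => by simp [hB0' j hj hj3]),
    sum_eq_single_of_mem 3 h3 hB0'] at hdeg
  omega

end

theorem stmt_13 (l : ℕ) (hl : 4 ≤ l) (A B : ℕ → ℕ)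
    (hA : ∑ i ∈ Finset.Icc 1 (l - 1), A i = l)
    (hdeg : ∑ i ∈ Finset.Icc 1 (l - 1), i * A i + ∑ j ∈ Finset.Icc 3 l, j * B j
      = 2 * (l + (∑ j ∈ Finset.Icc 3 l, B j) - 1))
    (β : ℝ)
    (hβ : β ∈ Set.Ioc 0 (2 * Real.arcsin (1 / (2 * Real.cos (π / (3 * ((l : ℝ) - 1)))))))
    (hroot : (∑ i ∈ Finset.Icc 1 (l - 1),
          (i : ℝ) * (A i : ℝ) *
            (2 * Real.arcsin (2 * Real.cos (π / (3 * (i : ℝ))) * Real.sin (β / 2)))) +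
        (∑ j ∈ Finset.Icc 3 l,
          (j : ℝ) * (B j : ℝ) *
            (2 * Real.arcsin (2 * Real.cos (π / (j : ℝ)) * Real.sin (β / 2)))) -
        2 * π = 0) :
    2 * π / (4 * (l : ℝ) - 6) ≤ β ∧
    (∀ x : ℝ, Real.cosh x = 1 / (2 * Real.sin (β / 2)) →
      Real.cosh x ≤ 1 / (2 * Real.sin (π / (4 * (l : ℝ) - 6)))) ∧
    (β = 2 * π / (4 * (l : ℝ) - 6) ↔
      (A 1 = l ∧ (∀ i, 2 ≤ i → i ≤ l - 1 → A i = 0) ∧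
        B 3 = l - 2 ∧ (∀ j, 4 ≤ j → j ≤ l → B j = 0))) := by
  obtain ⟨hβ₀, hβK⟩ := hβ
  have hβπ : β ≤ π := by linarith [arcsin_le_pi_div_two (1 / (2 * cos (π / (3 * ((l : ℝ) - 1)))))]
  have hsum : centralAngleSum l A B β = 2 * π := sub_eq_zero.1 hroot
  have hl4 : (4 : ℝ) ≤ l := by exact_mod_cast hl
  have hs : (0 : ℝ) < 4 * l - 6 := by linarith
  have hlower : 2 * π / (4 * l - 6) ≤ β := by
    by_contra! hlt
    rw [lt_div_iff₀' hs] at hlt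
    linarith [centralAngleSum_le hl hA hdeg hβ₀ hlt.le]
  refine ⟨hlower, fun x hx => ?_, fun heq => ?_, fun ⟨hA1, hA0, hB3, hB0⟩ => ?_⟩
  · have hπs₀ : 0 < π / (4 * l - 6) := div_pos pi_pos hs
    have hπs : π / (4 * l - 6) ≤ β / 2 := by
      linarith [show 2 * π / (4 * l - 6) = 2 * (π / (4 * l - 6)) by ring]
    rw [hx]
    gcongr
    · exact mul_pos two_pos (sin_pos_of_pos_of_lt_pi hπs₀ (by linarith))
    · exact sin_le_sin_of_le_of_le_pi_div_two (by linarith [pi_pos]) (by linarith) hπs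
  · have hβs : (4 * l - 6) * β = 2 * π := by rw [heq]; field_simp
    obtain ⟨hA0, hB0⟩ :=
      forall_eq_zero_of_centralAngleSum_eq hl hA hdeg hβ₀ hβs.le (hsum.trans hβs.symm)
    obtain ⟨hA1, hB3⟩ := eq_maximal_of_forall_eq_zero (by omega) hA hdeg hA0 hB0
    exact ⟨hA1, hA0, hB3, hB0⟩
  · rw [centralAngleSum_of_maximal (by omega) hβ₀.le hβπ hA1 hA0 hB3 hB0] at hsum
    rw [eq_div_iff hs.ne', mul_comm, hsum]
end
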